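/- If a, b, c, d are unit quaternions satisfying abcd = dcba and ab ≠ ba, then for x = (ab - ba)/‖ab - ba‖ one has Re(xc) = 0 and Re(xd) = 0. -/

import Mathlib

open Quaternion

/-!
Put `p = ab` and `q = ba`, so that the hypothesis reads `p c d = d c q`. Cancelling `d`, then `c`,
gives the conjugations `d⁻¹ (p c) d = c q` and `c⁻¹ (d⁻¹ p) c = q d⁻¹`. The real part is a trace,
`Re (u v) = Re (v u)`, hence conjugation invariant, so `Re (p c) = Re (q c)` and
`Re (p d⁻¹) = Re (q d⁻¹)`. Thus `p - q`, which is pure because `Re (ab) = Re (ba)`, is orthogonal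
to `c` and to `d⁻¹`; for a pure quaternion, orthogonality to `d⁻¹ = ‖d‖⁻² d̄` is orthogonality to `d`.
-/

namespace Quaternion

section CommRing

variable {R : Type*} [CommRing R]

theorem re_mul_comm (p q : ℍ[R]) : (p * q).re = (q * p).re := by
  simp only [re_mul]; ring

theorem re_mul_star_of_re_eq_zero {x : ℍ[R]} (hx : x.re = 0) (q : ℍ[R]) :
    (x * star q).re = -(x * q).re := by
  simp only [re_mul, re_star, imI_star, imJ_star, imK_star, hx]; ring

end CommRing

section Field

variable {R : Type*} [Field R] [LinearOrder R] [IsStrictOrderedRing R]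

theorem re_inv_mul_mul_self {u : ℍ[R]} (hu : u ≠ 0) (p : ℍ[R]) : (u⁻¹ * p * u).re = p.re := by
  rw [mul_assoc, re_mul_comm, mul_assoc, mul_inv_cancel₀ hu, mul_one]

theorem re_mul_eq_zero_of_re_mul_inv_eq_zero {x : ℍ[R]} (hx : x.re = 0) {q : ℍ[R]}
    (h : (x * q⁻¹).re = 0) : (x * q).re = 0 := by
  rcases eq_or_ne q 0 with rfl | hq
  · simp
  rw [inv_def, mul_smul_comm, re_smul, re_mul_star_of_re_eq_zero hx, smul_eq_mul] at h
  rwa [mul_eq_zero, or_iff_right (inv_ne_zero (normSq_ne_zero.2 hq)), neg_eq_zero] at h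

theorem re_mul_eq_of_mul_mul_eq {p q c d : ℍ[R]} (hcd : p * c * d = d * c * q) (hd : d ≠ 0) :
    (p * c).re = (q * c).re := by
  have hconj : d⁻¹ * (p * c) * d = c * q := by
    rw [mul_assoc, hcd, mul_assoc, inv_mul_cancel_left₀ hd]
  rw [← re_inv_mul_mul_self hd, hconj, re_mul_comm]

theorem re_mul_inv_eq_of_mul_mul_eq {p q c d : ℍ[R]} (hcd : p * c * d = d * c * q) (hc : c ≠ 0)
    (hd : d ≠ 0) : (p * d⁻¹).re = (q * d⁻¹).re := by
  have hconj : c⁻¹ * (d⁻¹ * p) * c = q * d⁻¹ :=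
    calc c⁻¹ * (d⁻¹ * p) * c = c⁻¹ * (d⁻¹ * (p * c * d)) * d⁻¹ := by simp [mul_assoc, hd]
      _ = q * d⁻¹ := by rw [hcd]; simp [mul_assoc, hd, hc]
  rw [re_mul_comm, ← re_inv_mul_mul_self hc, hconj]

end Field

end Quaternion

theorem normalized_commutator_orthogonal_cd_general (a b c d : ℍ[ℝ])
    (hc : ‖c‖ = 1) (hd : ‖d‖ = 1)
    (habcd : a * b * c * d = d * c * b * a) :
    ((‖a * b - b * a‖⁻¹ • (a * b - b * a)) * c).re = 0 ∧
    ((‖a * b - b * a‖⁻¹ • (a * b - b * a)) * d).re = 0 := by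
  have hc0 : c ≠ 0 := norm_ne_zero_iff.1 (hc ▸ one_ne_zero)
  have hd0 : d ≠ 0 := norm_ne_zero_iff.1 (hd ▸ one_ne_zero)
  have hpq : a * b * c * d = d * c * (b * a) := by simpa only [mul_assoc] using habcd
  set x := a * b - b * a
  have hx : x.re = 0 := by rw [re_sub, re_mul_comm, sub_self]
  have hxc : (x * c).re = 0 := by
    rw [sub_mul, re_sub, re_mul_eq_of_mul_mul_eq hpq hd0, sub_self]
  have hxd : (x * d).re = 0 := by
    refine re_mul_eq_zero_of_re_mul_inv_eq_zero hx ?_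
    rw [sub_mul, re_sub, re_mul_inv_eq_of_mul_mul_eq hpq hc0 hd0, sub_self]
  simp only [smul_mul_assoc, re_smul, hxc, hxd, smul_zero, and_self]

/-- If unit quaternions `a, b, c, d` satisfy `abcd = dcba` and `ab ≠ ba`, then for
`x = (ab - ba)/‖ab - ba‖` one has `Re(xc) = 0` and `Re(xd) = 0`. -/
theorem normalized_commutator_orthogonal_cd (a b c d : ℍ[ℝ])
    (ha : ‖a‖ = 1) (hb : ‖b‖ = 1) (hc : ‖c‖ = 1) (hd : ‖d‖ = 1)
    (habcd : a * b * c * d = d * c * b * a) (hab : a * b ≠ b * a) :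
    ((‖a * b - b * a‖⁻¹ • (a * b - b * a)) * c).re = 0 ∧
    ((‖a * b - b * a‖⁻¹ • (a * b - b * a)) * d).re = 0 :=
  normalized_commutator_orthogonal_cd_general a b c d hc hd habcd
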